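/- There is a constant C_k depending only on k such that for any ε ∈ (0,1/2) and any symmetric k×k matrix A with ‖A − Id_k‖ < ε (operator norm), the lower triangular matrix T with T A Tᵀ = Id_k satisfies ‖T − Id_k‖ < C_k ε. -/

import Mathlib

open Matrix

/-- Operator norm of a real k×k matrix induced by the Euclidean norm. -/
noncomputable def opNorm {k : ℕ} (A : Matrix (Fin k) (Fin k) ℝ) : ℝ :=
  ‖Matrix.toEuclideanCLM (𝕜 := ℝ) (n := Fin k) A‖

/-!
Since `T A Tᵀ = 1`, we have `T Tᵀ - 1 = T (1 - A) Tᵀ`; with the C⋆-identity `‖T Tᵀ‖ = ‖T‖²`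
this gives `‖T‖² ≤ 2` and `‖T Tᵀ - 1‖ ≤ 2ε`, so every entry of `T Tᵀ - 1` is at most `δ = 2ε`.
As `T` is lower triangular, `(T Tᵀ) i j = T i j * T j j + ∑ l < j, T i l * T j l`, so column `j`
of `T - 1` is controlled by `δ` and the earlier columns: if those are within `η ≤ 1/2` of zero,
column `j` is within `2δ + 3kη`. By induction column `j` is within `(3k + 2) ^ (j + 1) * δ`,
provided `(3k + 2) ^ k * δ ≤ 1/2`. For larger `ε` the crude bound `‖T - 1‖ ≤ ‖T‖ + 1 ≤ 3`
suffices.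
-/

open scoped Matrix.Norms.L2Operator

lemma opNorm_eq_l2_opNorm {k : ℕ} (A : Matrix (Fin k) (Fin k) ℝ) : opNorm A = ‖A‖ := rfl

lemma abs_sub_one_le_abs_sq_sub_one {x : ℝ} (hx : 0 ≤ x) : |x - 1| ≤ |x ^ 2 - 1| := by
  rw [show x ^ 2 - 1 = (x - 1) * (x + 1) by ring, abs_mul]
  exact le_mul_of_one_le_right (abs_nonneg _) (by rw [abs_of_nonneg (by positivity)]; linarith)

namespace Matrix

section L2OpNorm

variable {n : Type*} [Fintype n] [DecidableEq n]

lemma abs_apply_le_l2_opNorm (A : Matrix n n ℝ) (i j : n) : |A i j| ≤ ‖A‖ := by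
  calc |A i j| = ‖toEuclideanCLM (𝕜 := ℝ) A (EuclideanSpace.single j 1) i‖ := by
        simp [EuclideanSpace.single, mulVec, dotProduct]
    _ ≤ ‖toEuclideanCLM (𝕜 := ℝ) A (EuclideanSpace.single j 1)‖ := PiLp.norm_apply_le _ _
    _ ≤ ‖A‖ := by
      simpa [cstar_norm_def] using
        (toEuclideanCLM (𝕜 := ℝ) A).le_opNorm (EuclideanSpace.single j 1)

lemma l2_opNorm_one_le : ‖(1 : Matrix n n ℝ)‖ ≤ 1 := by
  rw [cstar_norm_def, map_one]
  exact ContinuousLinearMap.norm_id_le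

lemma l2_opNorm_transpose (A : Matrix n n ℝ) : ‖Aᵀ‖ = ‖A‖ := A.l2_opNorm_conjTranspose

lemma l2_opNorm_mul_transpose_self (A : Matrix n n ℝ) : ‖A * Aᵀ‖ = ‖A‖ ^ 2 := by
  simpa [sq, l2_opNorm_transpose] using Aᵀ.l2_opNorm_conjTranspose_mul_self

lemma l2_opNorm_single (i j : n) (c : ℝ) : ‖single i j c‖ = |c| := by
  have h : ‖single i j c‖ ^ 2 = |c| ^ 2 := by
    rw [← l2_opNorm_mul_transpose_self, transpose_single, single_mul_single_same,
      ← diagonal_single, l2_opNorm_diagonal, Pi.norm_single, norm_mul, Real.norm_eq_abs, sq]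
  exact (pow_left_inj₀ (norm_nonneg _) (abs_nonneg _) two_ne_zero).mp h

lemma l2_opNorm_le_card_sq_mul {A : Matrix n n ℝ} {b : ℝ} (hA : ∀ i j, |A i j| ≤ b) :
    ‖A‖ ≤ Fintype.card n ^ 2 * b := by
  conv_lhs => rw [matrix_eq_sum_single A]
  calc ‖∑ i, ∑ j, single i j (A i j)‖ ≤ ∑ i : n, ∑ j : n, b := by
        refine (norm_sum_le _ _).trans (Finset.sum_le_sum fun i _ => ?_)
        refine (norm_sum_le _ _).trans (Finset.sum_le_sum fun j _ => ?_)
        exact (l2_opNorm_single i j _).trans_le (hA i j)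
    _ = Fintype.card n ^ 2 * b := by simp [sq, mul_assoc]

lemma l2_opNorm_mul_transpose_sub_one_le {T A : Matrix n n ℝ} (h : T * A * Tᵀ = 1) :
    ‖T * Tᵀ - 1‖ ≤ ‖T‖ ^ 2 * ‖A - 1‖ := by
  have hconj : T * Tᵀ - 1 = T * (1 - A) * Tᵀ := by rw [mul_sub, mul_one, sub_mul, h]
  calc ‖T * Tᵀ - 1‖ ≤ ‖T‖ * ‖1 - A‖ * ‖Tᵀ‖ := by
        rw [hconj]
        exact (l2_opNorm_mul _ _).trans (by gcongr; exact l2_opNorm_mul _ _)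
    _ = ‖T‖ ^ 2 * ‖A - 1‖ := by rw [l2_opNorm_transpose, norm_sub_rev]; ring

lemma sq_l2_opNorm_mul_one_sub_le {T A : Matrix n n ℝ} (h : T * A * Tᵀ = 1) :
    ‖T‖ ^ 2 * (1 - ‖A - 1‖) ≤ 1 := by
  have := norm_le_norm_add_norm_sub' (T * Tᵀ) 1
  rw [l2_opNorm_mul_transpose_self] at this
  linarith [l2_opNorm_one_le (n := n), l2_opNorm_mul_transpose_sub_one_le h]

end L2OpNorm

section Cholesky

variable {ι : Type*} [Fintype ι] [LinearOrder ι] [LocallyFiniteOrderBot ι]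

lemma mul_transpose_apply_eq_sum_Iio_add {T : Matrix ι ι ℝ} (hT : ∀ i j, i < j → T i j = 0)
    (i j : ι) :
    (T * Tᵀ) i j = ∑ l ∈ Finset.Iio j, T i l * T j l + T i j * T j j := by
  have hvanish : ∀ l ∈ Finset.univ, l ∉ Finset.Iic j → T i l * T j l = 0 := fun l _ hl => by
    rw [hT j l (not_le.mp (by simpa using hl)), mul_zero]
  simp only [mul_apply, transpose_apply]
  rw [← Finset.sum_subset (Finset.subset_univ _) hvanish, ← Finset.Iio_insert,
    Finset.sum_insert Finset.notMem_Iio_self, add_comm]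

lemma abs_sum_Iio_mul_le {T : Matrix ι ι ℝ} {η : ℝ} (hη0 : 0 ≤ η) {j : ι}
    (hη : ∀ l < j, ∀ i, |(T - 1) i l| ≤ η) (i : ι) :
    |∑ l ∈ Finset.Iio j, T i l * T j l| ≤ Fintype.card ι * ((1 + η) * η) := by
  have hterm : ∀ l ∈ Finset.Iio j, |T i l * T j l| ≤ (1 + η) * η := fun l hl => by
    have hlj := Finset.mem_Iio.mp hl
    have hil : |T i l| ≤ 1 + η := by
      have := hη l hlj i
      rw [sub_apply] at this
      have h1 : |(1 : Matrix ι ι ℝ) i l| ≤ 1 := by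
        rcases eq_or_ne i l with rfl | h <;> simp [*]
      linarith [abs_sub_abs_le_abs_sub (T i l) ((1 : Matrix ι ι ℝ) i l)]
    have hjl : |T j l| ≤ η := by simpa [one_apply_ne hlj.ne'] using hη l hlj j
    rw [abs_mul]
    exact mul_le_mul hil hjl (abs_nonneg _) (by linarith)
  calc |∑ l ∈ Finset.Iio j, T i l * T j l| ≤ ∑ l ∈ Finset.Iio j, |T i l * T j l| :=
        Finset.abs_sum_le_sum_abs _ _
    _ ≤ (Finset.Iio j).card * ((1 + η) * η) := by
        simpa using Finset.sum_le_sum hterm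
    _ ≤ Fintype.card ι * ((1 + η) * η) := by
        gcongr
        exact Finset.card_le_univ _

lemma abs_sub_one_apply_le_of_columns_lt {T : Matrix ι ι ℝ} (hT : ∀ i j, i < j → T i j = 0)
    (hdiag : ∀ i, 0 < T i i) {δ η : ℝ} (hM : ∀ i j, |(T * Tᵀ - 1) i j| ≤ δ) (hη0 : 0 ≤ η)
    {j : ι} (hη : ∀ l < j, ∀ i, |(T - 1) i l| ≤ η)
    (hsmall : δ + Fintype.card ι * ((1 + η) * η) ≤ 1 / 2) (i : ι) :
    |(T - 1) i j| ≤ 2 * (δ + Fintype.card ι * ((1 + η) * η)) := by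
  set σ := δ + Fintype.card ι * ((1 + η) * η)
  have hσ0 : 0 ≤ σ := by have := (abs_nonneg _).trans (hM j j); positivity
  have hrow : ∀ i, T i j * T j j - (1 : Matrix ι ι ℝ) i j =
      (T * Tᵀ - 1) i j - ∑ l ∈ Finset.Iio j, T i l * T j l := fun i => by
    rw [sub_apply, mul_transpose_apply_eq_sum_Iio_add hT]; ring
  have hrow_le : ∀ i, |T i j * T j j - (1 : Matrix ι ι ℝ) i j| ≤ σ := fun i => by
    rw [hrow]
    exact (abs_sub _ _).trans (add_le_add (hM i j) (abs_sum_Iio_mul_le hη0 hη i))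
  have hjj : |T j j - 1| ≤ σ := by
    have := hrow_le j
    rw [one_apply_eq, ← sq] at this
    exact (abs_sub_one_le_abs_sq_sub_one (hdiag j).le).trans this
  rcases lt_trichotomy i j with hij | rfl | hji
  · rw [sub_apply, hT i j hij, one_apply_ne hij.ne, sub_zero, abs_zero]
    positivity
  · simpa using hjj.trans (by linarith)
  · have hTjj : 1 / 2 ≤ T j j := by linarith [(abs_le.mp hjj).1]
    have := hrow_le i
    rw [one_apply_ne hji.ne', sub_zero, abs_mul, abs_of_pos (hdiag j)] at this
    rw [sub_apply, one_apply_ne hji.ne', sub_zero]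
    nlinarith [abs_nonneg (T i j)]

lemma abs_sub_one_apply_le_of_abs_mul_transpose_sub_one_apply_le {k : ℕ}
    {T : Matrix (Fin k) (Fin k) ℝ} (hT : ∀ i j, i < j → T i j = 0) (hdiag : ∀ i, 0 < T i i)
    {δ : ℝ} (hδ : 0 ≤ δ) (hM : ∀ i j, |(T * Tᵀ - 1) i j| ≤ δ)
    (hsmall : (3 * k + 2 : ℝ) ^ k * δ ≤ 1 / 2) (i j : Fin k) :
    |(T - 1) i j| ≤ (3 * k + 2 : ℝ) ^ k * δ := by
  set ρ : ℝ := 3 * k + 2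
  have hρ : 1 ≤ ρ := by simp only [ρ]; linarith [(k.cast_nonneg : (0 : ℝ) ≤ k)]
  have hcols : ∀ n ≤ k, ∀ l : Fin k, (l : ℕ) < n → ∀ i, |(T - 1) i l| ≤ ρ ^ n * δ := by
    intro n
    induction n with
    | zero => simp
    | succ n ih =>
      intro hn l hl i
      have ih' := ih (by omega)
      have hpow : ∀ {m m'}, m ≤ m' → ρ ^ m * δ ≤ ρ ^ m' * δ := fun h =>
        mul_le_mul_of_nonneg_right (pow_le_pow_right₀ hρ h) hδ
      rcases Nat.lt_succ_iff_lt_or_eq.mp hl with hl | rfl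
      · exact (ih' l hl i).trans (hpow n.le_succ)
      set η := ρ ^ (l : ℕ) * δ
      have hη0 : 0 ≤ η := by positivity
      have hη_half : η ≤ 1 / 2 := (hpow (by omega)).trans hsmall
      have hδη : δ ≤ η := le_mul_of_one_le_left hδ (one_le_pow₀ hρ)
      have hquad : (k : ℝ) * ((1 + η) * η) ≤ k * (3 / 2 * η) := by gcongr; linarith
      have hstep : ρ ^ ((l : ℕ) + 1) * δ = 2 * η + 3 * k * η := by simp only [η, ρ]; ring
      have hbound :
          2 * (δ + Fintype.card (Fin k) * ((1 + η) * η)) ≤ ρ ^ ((l : ℕ) + 1) * δ := by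
        rw [Fintype.card_fin, hstep]
        linarith
      refine (abs_sub_one_apply_le_of_columns_lt hT hdiag hM hη0 ih' ?_ i).trans hbound
      linarith [hpow hn]
  exact hcols k le_rfl j j.isLt i

end Cholesky

end Matrix

/-- There is a constant C_k depending only on k such that for any ε ∈ (0,1/2) and any
symmetric k×k matrix A with ‖A − Id_k‖ < ε (operator norm), the lower triangular matrix T
with positive diagonal such that T A Tᵀ = Id_k satisfies ‖T − Id_k‖ < C_k ε. -/
theorem stmt1 (k : ℕ) :
    ∃ C > (0 : ℝ), ∀ ε : ℝ, ε ∈ Set.Ioo (0 : ℝ) (1/2) →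
      ∀ A : Matrix (Fin k) (Fin k) ℝ, A.IsSymm → opNorm (A - 1) < ε →
        ∀ T : Matrix (Fin k) (Fin k) ℝ,
          (∀ i j : Fin k, i < j → T i j = 0) → (∀ i : Fin k, 0 < T i i) →
          T * A * Tᵀ = 1 →
          opNorm (T - 1) < C * ε := by
  set ρ : ℝ := 3 * k + 2
  refine ⟨(2 * k ^ 2 + 12) * ρ ^ k, by positivity, ?_⟩
  have hρk : 0 < ρ ^ k := by positivity
  rintro ε ⟨hε0, hε⟩ A - hAε T hT hdiag h
  rw [opNorm_eq_l2_opNorm] at hAε ⊢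
  have hTsq : ‖T‖ ^ 2 ≤ 2 := by nlinarith [sq_l2_opNorm_mul_one_sub_le h, sq_nonneg ‖T‖]
  have hM : ‖T * Tᵀ - 1‖ ≤ 2 * ε :=
    (l2_opNorm_mul_transpose_sub_one_le h).trans (by nlinarith [norm_nonneg (A - 1)])
  by_cases hsmall : ρ ^ k * (2 * ε) ≤ 1 / 2
  · have hentries := abs_sub_one_apply_le_of_abs_mul_transpose_sub_one_apply_le hT hdiag
      (by positivity) (fun i j => (abs_apply_le_l2_opNorm _ i j).trans hM) hsmall
    calc ‖T - 1‖ ≤ k ^ 2 * (ρ ^ k * (2 * ε)) := by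
          simpa using l2_opNorm_le_card_sq_mul hentries
      _ < (2 * k ^ 2 + 12) * ρ ^ k * ε := by nlinarith
  · have hT2 : ‖T‖ ≤ 2 := by nlinarith [norm_nonneg T]
    calc ‖T - 1‖ ≤ ‖T‖ + 1 := (norm_sub_le _ _).trans (by gcongr; exact l2_opNorm_one_le)
      _ ≤ 3 := by linarith
      _ < (2 * k ^ 2 + 12) * ρ ^ k * ε := by nlinarith [sq_nonneg (k : ℝ)]
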